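/- Let A be any operator and ρ, X, E positive semidefinite operators on a finite-dimensional complex Hilbert space with 0 ≤ E ≤ 1. Then Tr(A [X + (ρ − X)_+] A†) ≥ Tr(A ρ A† (1 − E) + A X A† E), and equality holds if and only if both A (X − ρ)_+ A† = (A (X − ρ) A†)_+ and P_≥(A (X − ρ) A†) ≥ E ≥ P_>(A (X − ρ) A†). -/

import Mathlib

/-!
Put `D = X - ρ`, `L = A D Aᴴ` and let `P` be the spectral projection of `L` onto its negative
eigenvalues. Since `(ρ - X)₊ = D₋`, the right-hand side minus the left-hand side is the trace of
`A D₋ Aᴴ (1 - P) + A D₊ Aᴴ P + L₋ E + L₊ (1 - E)`, a sum of products of two positive semidefinite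
matrices. Each such trace is nonnegative and vanishes only if the product does. The first two
products vanish together exactly when `A D₊ Aᴴ = L₊`; `L₋ E = 0` means `E ≤ P_≥(L)`, and
`L₊ (1 - E) = 0` means `P_>(L) ≤ E`, because for `0 ≤ F ≤ 1` and a projection `Q`,
`Q F = 0 ↔ F ≤ 1 - Q`.
-/

open Matrix
open scoped ComplexOrder

/-- Positive part `A₊` of a Hermitian matrix (junk value `0` on non-Hermitian input). -/
noncomputable def matPosPart {n : ℕ} (A : Matrix (Fin n) (Fin n) ℂ) : Matrix (Fin n) (Fin n) ℂ :=
  if hA : A.IsHermitian then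
    (hA.eigenvectorUnitary : Matrix (Fin n) (Fin n) ℂ) *
      Matrix.diagonal (fun i => if 0 < hA.eigenvalues i then (hA.eigenvalues i : ℂ) else 0) *
      star (hA.eigenvectorUnitary : Matrix (Fin n) (Fin n) ℂ)
  else 0

/-- Projection `P₍>₎(A)` onto the span of eigenvectors of positive eigenvalues. -/
noncomputable def matProjPos {n : ℕ} (A : Matrix (Fin n) (Fin n) ℂ) : Matrix (Fin n) (Fin n) ℂ :=
  if hA : A.IsHermitian then
    (hA.eigenvectorUnitary : Matrix (Fin n) (Fin n) ℂ) *
      Matrix.diagonal (fun i => if 0 < hA.eigenvalues i then (1 : ℂ) else 0) *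
      star (hA.eigenvectorUnitary : Matrix (Fin n) (Fin n) ℂ)
  else 0

/-- Projection `P₍≥₎(A)` onto the span of eigenvectors of nonnegative eigenvalues. -/
noncomputable def matProjNonneg {n : ℕ} (A : Matrix (Fin n) (Fin n) ℂ) : Matrix (Fin n) (Fin n) ℂ :=
  if hA : A.IsHermitian then
    (hA.eigenvectorUnitary : Matrix (Fin n) (Fin n) ℂ) *
      Matrix.diagonal (fun i => if 0 ≤ hA.eigenvalues i then (1 : ℂ) else 0) *
      star (hA.eigenvectorUnitary : Matrix (Fin n) (Fin n) ℂ)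
  else 0

open scoped MatrixOrder

namespace Matrix

variable {n m 𝕜 : Type*} [Fintype n] [RCLike 𝕜]

theorem IsHermitian.mul_eq_zero_comm {S T : Matrix n n 𝕜} (hS : S.IsHermitian)
    (hT : T.IsHermitian) : S * T = 0 ↔ T * S = 0 := by
  rw [← conjTranspose_eq_zero, conjTranspose_mul, hS.eq, hT.eq]

variable [DecidableEq n]

theorem PosSemidef.mul_eq_zero_of_conjTranspose_mul_mul_eq_zero {T : Matrix n n 𝕜}
    (hT : T.PosSemidef) {B : Matrix n m 𝕜} (h : Bᴴ * T * B = 0) : T * B = 0 := by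
  obtain ⟨C, rfl⟩ := CStarAlgebra.nonneg_iff_eq_star_mul_self.mp hT.nonneg
  rw [star_eq_conjTranspose] at h ⊢
  rw [conjTranspose_mul_self_mul_eq_zero, ← conjTranspose_mul_self_eq_zero, conjTranspose_mul]
  simpa only [Matrix.mul_assoc] using h

theorem PosSemidef.trace_mul_nonneg {S T : Matrix n n 𝕜} (hS : S.PosSemidef) (hT : T.PosSemidef) :
    0 ≤ (S * T).trace := by
  obtain ⟨B, rfl⟩ := CStarAlgebra.nonneg_iff_eq_star_mul_self.mp hS.nonneg
  rw [star_eq_conjTranspose, Matrix.mul_assoc, trace_mul_comm]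
  exact (hT.mul_mul_conjTranspose_same B).trace_nonneg

theorem PosSemidef.trace_mul_eq_zero_iff {S T : Matrix n n 𝕜} (hS : S.PosSemidef)
    (hT : T.PosSemidef) : (S * T).trace = 0 ↔ S * T = 0 := by
  obtain ⟨B, rfl⟩ := CStarAlgebra.nonneg_iff_eq_star_mul_self.mp hS.nonneg
  rw [star_eq_conjTranspose, conjTranspose_mul_self_mul_eq_zero, Matrix.mul_assoc, trace_mul_comm,
    (hT.mul_mul_conjTranspose_same B).trace_eq_zero_iff]
  refine ⟨fun h => ?_, fun h => by rw [h, Matrix.zero_mul]⟩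
  have hTB : T * Bᴴ = 0 := hT.mul_eq_zero_of_conjTranspose_mul_mul_eq_zero <| by
    rwa [conjTranspose_conjTranspose]
  rwa [← conjTranspose_eq_zero, conjTranspose_mul, hT.1.eq]

theorem mul_eq_zero_iff_le_one_sub {P F : Matrix n n 𝕜} (hP : P.IsHermitian)
    (hPP : IsIdempotentElem P) (hF0 : 0 ≤ F) (hF1 : F ≤ 1) : P * F = 0 ↔ F ≤ 1 - P := by
  have hF := nonneg_iff_posSemidef.mp hF0
  have hP' : star P = P := hP.eq
  constructor
  · intro hPF
    have hFP : F * P = 0 := (hP.mul_eq_zero_comm hF.1).mp hPF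
    calc F = star (1 - P) * F * (1 - P) := by
          simp only [star_sub, star_one, hP', Matrix.sub_mul, Matrix.mul_sub, Matrix.one_mul,
            Matrix.mul_one, hPF, hFP, sub_zero]
      _ ≤ star (1 - P) * 1 * (1 - P) := star_left_conjugate_le_conjugate hF1 _
      _ = 1 - P := by simp only [star_sub, star_one, hP', Matrix.mul_one, hPP.one_sub.eq]
  · intro hF1P
    have hPFP : star P * F * P = 0 := by
      refine le_antisymm ?_ (star_left_conjugate_nonneg hF0 P)
      calc star P * F * P ≤ star P * (1 - P) * P := star_left_conjugate_le_conjugate hF1P _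
        _ = 0 := by
          simp only [hP', Matrix.mul_sub, Matrix.mul_one, hPP.eq, sub_self, Matrix.zero_mul]
    rw [star_eq_conjTranspose] at hPFP
    exact (hF.1.mul_eq_zero_comm hP).mp (hF.mul_eq_zero_of_conjTranspose_mul_mul_eq_zero hPFP)

theorem continuousOn_spectrum (f : ℝ → ℝ) (H : Matrix n n 𝕜) : ContinuousOn f (spectrum ℝ H) :=
  finite_real_spectrum.continuousOn f

theorem cfc_mul_cfc (f g : ℝ → ℝ) (H : Matrix n n 𝕜) :
    cfc f H * cfc g H = cfc (fun x => f x * g x) H :=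
  (cfc_mul f g H (continuousOn_spectrum f H) (continuousOn_spectrum g H)).symm

theorem cfc_mul_eq_zero_of_imp {f g : ℝ → ℝ} (hfg : ∀ x, f x = 0 → g x = 0) {H : Matrix n n 𝕜}
    {B : Matrix n m 𝕜} (h : cfc f H * B = 0) : cfc g H * B = 0 := by
  have hg : cfc g H = cfc (fun x => g x / f x) H * cfc f H := by
    rw [cfc_mul_cfc]
    congr 1
    funext x
    by_cases hx : f x = 0
    · simp [hx, hfg x hx]
    · field_simp
  rw [hg, Matrix.mul_assoc, h, Matrix.mul_zero]

theorem cfc_mul_eq_zero_iff {f g : ℝ → ℝ} (hfg : ∀ x, f x = 0 ↔ g x = 0) (H : Matrix n n 𝕜)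
    (B : Matrix n m 𝕜) : cfc f H * B = 0 ↔ cfc g H * B = 0 :=
  ⟨cfc_mul_eq_zero_of_imp fun x => (hfg x).mp, cfc_mul_eq_zero_of_imp fun x => (hfg x).mpr⟩

theorem posPart_eq_cfc (H : Matrix n n 𝕜) : H⁺ = cfc (fun x : ℝ => x⁺) H := by
  rw [CFC.posPart_def, cfcₙ_eq_cfc]

theorem negPart_eq_cfc (H : Matrix n n 𝕜) : H⁻ = cfc (fun x : ℝ => x⁻) H := by
  rw [CFC.negPart_def, cfcₙ_eq_cfc]

noncomputable def spectralProj (s : Set ℝ) (H : Matrix n n 𝕜) : Matrix n n 𝕜 :=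
  cfc (s.indicator 1) H

theorem isIdempotentElem_spectralProj (s : Set ℝ) (H : Matrix n n 𝕜) :
    IsIdempotentElem (spectralProj s H) := by
  rw [IsIdempotentElem, spectralProj, cfc_mul_cfc]
  congr 1
  funext x
  by_cases hx : x ∈ s <;> simp [hx]

theorem isHermitian_spectralProj (s : Set ℝ) (H : Matrix n n 𝕜) :
    (spectralProj s H).IsHermitian :=
  IsSelfAdjoint.isHermitian (cfc_predicate _ H)

theorem spectralProj_nonneg (s : Set ℝ) (H : Matrix n n 𝕜) : 0 ≤ spectralProj s H :=
  cfc_nonneg fun x _ => Set.indicator_nonneg (fun _ _ => zero_le_one) x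

theorem spectralProj_le_one (s : Set ℝ) (H : Matrix n n 𝕜) : spectralProj s H ≤ 1 :=
  cfc_le_one _ H fun x _ => Set.indicator_le_self' (fun _ _ => zero_le_one) x

theorem one_sub_spectralProj {H : Matrix n n 𝕜} (hH : H.IsHermitian) (s : Set ℝ) :
    1 - spectralProj s H = spectralProj sᶜ H := by
  rw [spectralProj, spectralProj, ← cfc_one ℝ H hH.isSelfAdjoint,
    ← cfc_sub _ _ H (continuousOn_spectrum _ H) (continuousOn_spectrum _ H)]
  congr 1
  funext x
  by_cases hx : x ∈ s <;> simp [hx]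

theorem posPart_mul_spectralProj_Iio (H : Matrix n n 𝕜) :
    H⁺ * spectralProj (Set.Iio 0) H = 0 := by
  rw [posPart_eq_cfc, spectralProj, cfc_mul_cfc]
  convert cfc_zero ℝ H using 2
  funext x
  by_cases hx : x < 0 <;> simp [hx, le_of_lt]

theorem negPart_mul_spectralProj_Iio (H : Matrix n n 𝕜) :
    H⁻ * spectralProj (Set.Iio 0) H = H⁻ := by
  rw [negPart_eq_cfc, spectralProj, cfc_mul_cfc]
  congr 1
  funext x
  by_cases hx : x < 0 <;> simp [hx, not_lt.mp]

theorem mul_spectralProj_Iio {H : Matrix n n 𝕜} (hH : H.IsHermitian) :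
    H * spectralProj (Set.Iio 0) H = -H⁻ := by
  calc H * spectralProj (Set.Iio 0) H = (H⁺ - H⁻) * spectralProj (Set.Iio 0) H := by
        rw [CFC.posPart_sub_negPart H hH.isSelfAdjoint]
    _ = -H⁻ := by
        rw [Matrix.sub_mul, posPart_mul_spectralProj_Iio, negPart_mul_spectralProj_Iio, zero_sub]

theorem posPart_mul_eq_zero_iff (H : Matrix n n 𝕜) (B : Matrix n m 𝕜) :
    H⁺ * B = 0 ↔ spectralProj (Set.Ioi 0) H * B = 0 := by
  rw [posPart_eq_cfc, spectralProj]
  exact cfc_mul_eq_zero_iff (fun x => by simp [posPart_eq_zero, not_lt]) H B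

theorem negPart_mul_eq_zero_iff (H : Matrix n n 𝕜) (B : Matrix n m 𝕜) :
    H⁻ * B = 0 ↔ spectralProj (Set.Iio 0) H * B = 0 := by
  rw [negPart_eq_cfc, spectralProj]
  exact cfc_mul_eq_zero_iff (fun x => by simp [negPart_eq_zero, not_lt]) H B

theorem conj_posPart_eq_posPart_iff (A : Matrix n n 𝕜) {D : Matrix n n 𝕜} (hD : D.IsHermitian) :
    A * D⁺ * Aᴴ = (A * D * Aᴴ)⁺ ↔
      A * D⁻ * Aᴴ * (1 - spectralProj (Set.Iio 0) (A * D * Aᴴ)) = 0 ∧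
        A * D⁺ * Aᴴ * spectralProj (Set.Iio 0) (A * D * Aᴴ) = 0 := by
  set L := A * D * Aᴴ
  set P := spectralProj (Set.Iio 0) L
  have hL : L.IsHermitian := isHermitian_mul_mul_conjTranspose A hD
  have hM : A * D⁺ * Aᴴ - A * D⁻ * Aᴴ = L := by
    rw [← Matrix.sub_mul, ← Matrix.mul_sub, CFC.posPart_sub_negPart D hD.isSelfAdjoint]
  have hL' : L⁺ - L⁻ = L := CFC.posPart_sub_negPart L hL.isSelfAdjoint
  constructor
  · intro h
    have hneg : A * D⁻ * Aᴴ = L⁻ := sub_right_inj.mp ((h ▸ hM).trans hL'.symm)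
    rw [h, hneg, Matrix.mul_sub, Matrix.mul_one, negPart_mul_spectralProj_Iio, sub_self,
      posPart_mul_spectralProj_Iio]
    exact ⟨rfl, rfl⟩
  · rintro ⟨hneg, hpos⟩
    rw [Matrix.mul_sub, Matrix.mul_one, sub_eq_zero] at hneg
    have hLP : L * P = -(A * D⁻ * Aᴴ) := by
      rw [← hM, Matrix.sub_mul, hpos, ← hneg, zero_sub]
    have hneg' : A * D⁻ * Aᴴ = L⁻ := neg_inj.mp (hLP.symm.trans (mul_spectralProj_Iio hL))
    exact sub_left_inj.mp (hM.trans (hneg' ▸ hL'.symm))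

theorem conj_add_posPart_eq (A ρ X E : Matrix n n 𝕜) (hD : (X - ρ).IsHermitian) :
    A * (X + (ρ - X)⁺) * Aᴴ = A * ρ * Aᴴ * (1 - E) + A * X * Aᴴ * E +
      (A * (X - ρ)⁻ * Aᴴ * (1 - spectralProj (Set.Iio 0) (A * (X - ρ) * Aᴴ)) +
        A * (X - ρ)⁺ * Aᴴ * spectralProj (Set.Iio 0) (A * (X - ρ) * Aᴴ) +
        (A * (X - ρ) * Aᴴ)⁻ * E + (A * (X - ρ) * Aᴴ)⁺ * (1 - E)) := by
  have hL : (A * (X - ρ) * Aᴴ).IsHermitian := isHermitian_mul_mul_conjTranspose A hD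
  have hDpos := eq_add_of_sub_eq' (CFC.posPart_sub_negPart (X - ρ) hD.isSelfAdjoint)
  have hLpos := eq_add_of_sub_eq' (CFC.posPart_sub_negPart _ hL.isSelfAdjoint)
  have hLneg := neg_eq_iff_eq_neg.mp (mul_spectralProj_Iio hL).symm
  rw [← neg_sub X ρ, CFC.posPart_neg, hDpos, hLpos, hLneg]
  generalize spectralProj (Set.Iio 0) (A * (X - ρ) * Aᴴ) = P
  generalize (X - ρ)⁻ = N
  noncomm_ring

theorem trace_le_trace_conj_add_posPart_and_eq_iff (A ρ X E : Matrix n n 𝕜)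
    (hD : (X - ρ).IsHermitian) (hE0 : 0 ≤ E) (hE1 : E ≤ 1) :
    (A * ρ * Aᴴ * (1 - E) + A * X * Aᴴ * E).trace ≤ (A * (X + (ρ - X)⁺) * Aᴴ).trace ∧
      ((A * ρ * Aᴴ * (1 - E) + A * X * Aᴴ * E).trace = (A * (X + (ρ - X)⁺) * Aᴴ).trace ↔
        A * (X - ρ)⁺ * Aᴴ = (A * (X - ρ) * Aᴴ)⁺ ∧
          E ≤ spectralProj (Set.Ici 0) (A * (X - ρ) * Aᴴ) ∧
          spectralProj (Set.Ioi 0) (A * (X - ρ) * Aᴴ) ≤ E) := by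
  have hL : (A * (X - ρ) * Aᴴ).IsHermitian := isHermitian_mul_mul_conjTranspose A hD
  have hE := nonneg_iff_posSemidef.mp hE0
  have hconj {M : Matrix n n 𝕜} (hM : 0 ≤ M) : (A * M * Aᴴ).PosSemidef :=
    (nonneg_iff_posSemidef.mp hM).mul_mul_conjTranspose_same A
  have hP := nonneg_iff_posSemidef.mp (spectralProj_nonneg (Set.Iio 0) (A * (X - ρ) * Aᴴ))
  have h1P := le_iff.mp (spectralProj_le_one (Set.Iio 0) (A * (X - ρ) * Aᴴ))
  have hLneg := nonneg_iff_posSemidef.mp (CFC.negPart_nonneg (A * (X - ρ) * Aᴴ))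
  have hLpos := nonneg_iff_posSemidef.mp (CFC.posPart_nonneg (A * (X - ρ) * Aᴴ))
  have n1 := (hconj (CFC.negPart_nonneg (X - ρ))).trace_mul_nonneg h1P
  have n2 := (hconj (CFC.posPart_nonneg (X - ρ))).trace_mul_nonneg hP
  have n3 := hLneg.trace_mul_nonneg hE
  have n4 := hLpos.trace_mul_nonneg (le_iff.mp hE1)
  rw [conj_add_posPart_eq A ρ X E hD, trace_add _ (_ + _), trace_add, trace_add, trace_add,
    trace_add]
  refine ⟨le_add_of_nonneg_right (add_nonneg (add_nonneg (add_nonneg n1 n2) n3) n4), ?_⟩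
  rw [left_eq_add, add_eq_zero_iff_of_nonneg (add_nonneg (add_nonneg n1 n2) n3) n4,
    add_eq_zero_iff_of_nonneg (add_nonneg n1 n2) n3, add_eq_zero_iff_of_nonneg n1 n2,
    (hconj (CFC.negPart_nonneg (X - ρ))).trace_mul_eq_zero_iff h1P,
    (hconj (CFC.posPart_nonneg (X - ρ))).trace_mul_eq_zero_iff hP,
    hLneg.trace_mul_eq_zero_iff hE, hLpos.trace_mul_eq_zero_iff (le_iff.mp hE1),
    ← conj_posPart_eq_posPart_iff A hD, negPart_mul_eq_zero_iff, posPart_mul_eq_zero_iff,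
    mul_eq_zero_iff_le_one_sub (isHermitian_spectralProj _ _) (isIdempotentElem_spectralProj _ _)
      hE0 hE1,
    mul_eq_zero_iff_le_one_sub (isHermitian_spectralProj _ _) (isIdempotentElem_spectralProj _ _)
      (sub_nonneg.mpr hE1) (sub_le_self 1 hE0),
    one_sub_spectralProj hL, Set.compl_Iio, sub_le_sub_iff_left, and_assoc]


theorem IsHermitian.unitary_mul_diagonal_mul_star_eq_cfc {H : Matrix n n 𝕜} (hH : H.IsHermitian)
    (f : ℝ → ℝ) :
    (hH.eigenvectorUnitary : Matrix n n 𝕜) * diagonal (fun i => (f (hH.eigenvalues i) : 𝕜)) *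
      star (hH.eigenvectorUnitary : Matrix n n 𝕜) = cfc f H := by
  rw [hH.cfc_eq]
  rfl

end Matrix

theorem matPosPart_eq_posPart {n : ℕ} {H : Matrix (Fin n) (Fin n) ℂ} (hH : H.IsHermitian) :
    matPosPart H = H⁺ := by
  rw [matPosPart, dif_pos hH, posPart_eq_cfc, ← hH.unitary_mul_diagonal_mul_star_eq_cfc]
  congr 3
  funext i
  split_ifs with h
  · simp [h.le]
  · simp [not_lt.mp h]

theorem matProjPos_eq_spectralProj {n : ℕ} {H : Matrix (Fin n) (Fin n) ℂ} (hH : H.IsHermitian) :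
    matProjPos H = spectralProj (Set.Ioi 0) H := by
  rw [matProjPos, dif_pos hH, spectralProj, ← hH.unitary_mul_diagonal_mul_star_eq_cfc]
  congr 3
  funext i
  split_ifs with h <;> simp [h]

theorem matProjNonneg_eq_spectralProj {n : ℕ} {H : Matrix (Fin n) (Fin n) ℂ}
    (hH : H.IsHermitian) : matProjNonneg H = spectralProj (Set.Ici 0) H := by
  rw [matProjNonneg, dif_pos hH, spectralProj, ← hH.unitary_mul_diagonal_mul_star_eq_cfc]
  congr 3
  funext i
  split_ifs with h <;> simp [h]

/-- For any operator `A` and PSD `ρ`, `X`, `E` with `0 ≤ E ≤ 1`,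
`Tr(A[X + (ρ − X)₊]A†) ≥ Tr(AρA†(1 − E) + AXA†E)`, with equality iff both
`A(X − ρ)₊A† = (A(X − ρ)A†)₊` and `P₍≥₎(A(X − ρ)A†) ≥ E ≥ P₍>₎(A(X − ρ)A†)`. -/
theorem stmt_18 {n : ℕ} (A ρ X E : Matrix (Fin n) (Fin n) ℂ)
    (hρ : ρ.PosSemidef) (hX : X.PosSemidef)
    (hE : E.PosSemidef) (hE1 : ((1 : Matrix (Fin n) (Fin n) ℂ) - E).PosSemidef) :
    (A * ρ * Aᴴ * (1 - E) + A * X * Aᴴ * E).trace.re ≤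
      (A * (X + matPosPart (ρ - X)) * Aᴴ).trace.re ∧
    ((A * ρ * Aᴴ * (1 - E) + A * X * Aᴴ * E).trace.re =
        (A * (X + matPosPart (ρ - X)) * Aᴴ).trace.re ↔
      (A * matPosPart (X - ρ) * Aᴴ = matPosPart (A * (X - ρ) * Aᴴ) ∧
        (matProjNonneg (A * (X - ρ) * Aᴴ) - E).PosSemidef ∧
        (E - matProjPos (A * (X - ρ) * Aᴴ)).PosSemidef)) := by
  have hD : (X - ρ).IsHermitian := hX.1.sub hρ.1
  have hL : (A * (X - ρ) * Aᴴ).IsHermitian := isHermitian_mul_mul_conjTranspose A hD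
  rw [matPosPart_eq_posPart (hρ.1.sub hX.1), matPosPart_eq_posPart hD, matPosPart_eq_posPart hL,
    matProjNonneg_eq_spectralProj hL, matProjPos_eq_spectralProj hL]
  obtain ⟨hle, heq⟩ :=
    trace_le_trace_conj_add_posPart_and_eq_iff A ρ X E hD hE.nonneg (le_iff.mpr hE1)
  obtain ⟨hre, him⟩ := Complex.le_def.mp hle
  exact ⟨hre, Iff.trans ⟨fun h => Complex.ext h him, congrArg Complex.re⟩ heq⟩
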